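/- Let a > 0 and c(l,1) be defined by c(1,1) = c(1)·a/(3a+2) with c(1) = B(a,a+2)/B(a,a+1), and c(l,1) = c(l−1,1)·(l−2+a)/((a+1)(l+1+a/(a+1))) for l ≥ 2. Then c(l,1) = Θ(l^{−3+a²/(a+1)}/(1+a)^l) as l → ∞. -/

import Mathlib

open Real

noncomputable def betaF (x y : ℝ) : ℝ := Real.Gamma x * Real.Gamma y / Real.Gamma (x + y)

/-!
With `b = 3 + a/(a+1)` the recurrence reads `c (n+2) = c (n+1) · (a+n) / ((a+1)(b+n))`, so
`c (n+1) (a+1)^n = c 1 · ∏_{j<n} (a+j)/(b+j)`. By Euler's limit formula `GammaSeq s n → Γ(s)`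
this product is asymptotic to `Γ(b)/Γ(a) · n^(a-b)`, and `a - b = -3 + a²/(a+1)`. Hence
`c l (1+a)^l / l^(-3 + a²/(a+1))` converges to a positive limit, which gives both bounds.
-/

open Filter Topology Finset

lemma betaF_pos {x y : ℝ} (hx : 0 < x) (hy : 0 < y) : 0 < betaF x y := by
  have := Gamma_pos_of_pos hx
  have := Gamma_pos_of_pos hy
  have := Gamma_pos_of_pos (add_pos hx hy)
  unfold betaF
  positivity

theorem prod_range_add_div_add_mul_rpow_eq_GammaSeq_div {a b : ℝ} (ha : 0 < a) (hb : 0 < b)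
    {n : ℕ} (hn : n ≠ 0) :
    (∏ j ∈ range n, (a + j) / (b + j)) * (n : ℝ) ^ (b - a) =
      GammaSeq b n / GammaSeq a n * ((b + n) / (a + n)) := by
  have hn' : (0 : ℝ) < n := by positivity
  have hPa : 0 < ∏ j ∈ range n, (a + j) := prod_pos fun j _ => by positivity
  have hPb : 0 < ∏ j ∈ range n, (b + j) := prod_pos fun j _ => by positivity
  simp only [GammaSeq, prod_range_succ, prod_div_distrib, rpow_sub hn']
  field_simp

theorem tendsto_prod_range_add_div_add_mul_rpow {a b : ℝ} (ha : 0 < a) (hb : 0 < b) :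
    Tendsto (fun n : ℕ => (∏ j ∈ range n, (a + j) / (b + j)) * (n : ℝ) ^ (b - a)) atTop
      (𝓝 (Gamma b / Gamma a)) := by
  have hratio := tendsto_add_mul_div_add_mul_atTop_nhds b a 1 one_ne_zero
  simp only [one_mul, div_one] at hratio
  have hlim := ((GammaSeq_tendsto_Gamma b).div (GammaSeq_tendsto_Gamma a)
    (Gamma_pos_of_pos ha).ne').mul hratio
  rw [mul_one] at hlim
  refine hlim.congr' ?_
  filter_upwards [eventually_ne_atTop 0] with n hn
  exact (prod_range_add_div_add_mul_rpow_eq_GammaSeq_div ha hb hn).symm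

theorem tendsto_mul_pow_mul_rpow_of_succ_eq {a b q : ℝ} (ha : 0 < a) (hb : 0 < b) (hq : 0 < q)
    {d : ℕ → ℝ} (hd : ∀ n : ℕ, d (n + 1) = d n * ((a + n) / (q * (b + n)))) :
    Tendsto (fun n : ℕ => d n * q ^ n * (n : ℝ) ^ (b - a)) atTop
      (𝓝 (d 0 * (Gamma b / Gamma a))) := by
  have hclosed : ∀ n : ℕ, d n * q ^ n = d 0 * ∏ j ∈ range n, (a + j) / (b + j) := by
    intro n
    induction n with
    | zero => simp
    | succ n ih =>
      rw [hd, prod_range_succ, ← mul_assoc, ← ih, pow_succ]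
      field_simp
  simp_rw [hclosed, mul_assoc]
  exact (tendsto_prod_range_add_div_add_mul_rpow ha hb).const_mul _

theorem tendsto_natCast_add_one_div_rpow (s : ℝ) :
    Tendsto (fun n : ℕ => (((n : ℝ) + 1) / n) ^ s) atTop (𝓝 1) := by
  have h := (tendsto_add_mul_div_add_mul_atTop_nhds (1 : ℝ) 0 1 one_ne_zero).rpow_const
    (p := s) (Or.inl (by norm_num))
  simpa [add_comm] using h

theorem exists_pos_bounds_of_tendsto_div {u v : ℕ → ℝ} {K : ℝ} (hK : 0 < K)
    (hv : ∀ᶠ n in atTop, 0 < v n) (h : Tendsto (fun n => u n / v n) atTop (𝓝 K)) :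
    ∃ c₁ > 0, ∃ c₂ > 0, ∃ L : ℕ, ∀ n, L ≤ n → c₁ * v n ≤ u n ∧ u n ≤ c₂ * v n := by
  obtain ⟨L, hL⟩ := eventually_atTop.1
    (hv.and (h.eventually (Ioo_mem_nhds (half_lt_self hK) (lt_two_mul_self hK))))
  refine ⟨K / 2, by positivity, 2 * K, by positivity, L, fun n hn => ?_⟩
  obtain ⟨hvn, hlo, hhi⟩ := hL n hn
  exact ⟨(le_div_iff₀ hvn).1 hlo.le, (div_le_iff₀ hvn).1 hhi.le⟩

theorem tendsto_div_rpow_div_rpow_of_succ_eq {a b q : ℝ} (ha : 0 < a) (hb : 0 < b) (hq : 0 < q)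
    {c : ℕ → ℝ} (hc : ∀ n : ℕ, c (n + 2) = c (n + 1) * ((a + n) / (q * (b + n)))) :
    Tendsto (fun l : ℕ => c l / ((l : ℝ) ^ (a - b) / q ^ (l : ℝ))) atTop
      (𝓝 (c 1 * (Gamma b / Gamma a) * q)) := by
  have hlim := ((tendsto_mul_pow_mul_rpow_of_succ_eq (d := fun n => c (n + 1)) ha hb hq
    hc).mul_const q).mul (tendsto_natCast_add_one_div_rpow (b - a))
  rw [mul_one] at hlim
  refine (tendsto_add_atTop_iff_nat 1).1 (hlim.congr' ?_)
  filter_upwards [eventually_ne_atTop 0] with n hn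
  have hn' : (0 : ℝ) < n := by positivity
  rw [div_rpow (by positivity) hn'.le, ← neg_sub a b, rpow_neg hn'.le, rpow_neg (by positivity),
    rpow_natCast]
  push_cast
  field_simp
  ring

theorem cl1_asymptotic (a : ℝ) (ha : 0 < a) (c : ℕ → ℝ)
    (h1 : c 1 = betaF a (a + 2) / betaF a (a + 1) * (a / (3 * a + 2)))
    (hrec : ∀ l : ℕ, 2 ≤ l →
      c l = c (l - 1) * (((l : ℝ) - 2 + a) /
        ((a + 1) * ((l : ℝ) + 1 + a / (a + 1))))) :
    ∃ c₁ > 0, ∃ c₂ > 0, ∃ L : ℕ, ∀ l : ℕ, L ≤ l →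
      c₁ * (l : ℝ) ^ (-3 + a ^ 2 / (a + 1)) / (1 + a) ^ (l : ℝ) ≤ c l ∧
      c l ≤ c₂ * (l : ℝ) ^ (-3 + a ^ 2 / (a + 1)) / (1 + a) ^ (l : ℝ) := by
  set b := 3 + a / (a + 1)
  have hb : 0 < b := by positivity
  have hα : -3 + a ^ 2 / (a + 1) = a - b := by simp only [b]; field_simp; ring
  have hc1 : 0 < c 1 := by
    have := betaF_pos ha (by linarith : 0 < a + 2)
    have := betaF_pos ha (by linarith : 0 < a + 1)
    rw [h1]; positivity
  have hstep : ∀ n : ℕ, c (n + 2) = c (n + 1) * ((a + n) / ((1 + a) * (b + n))) := by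
    intro n
    rw [hrec (n + 2) (by omega)]
    push_cast
    simp only [b]
    ring
  have hK : 0 < c 1 * (Gamma b / Gamma a) * (1 + a) := by
    have := Gamma_pos_of_pos ha
    have := Gamma_pos_of_pos hb
    positivity
  have hv : ∀ᶠ l : ℕ in atTop, 0 < (l : ℝ) ^ (a - b) / (1 + a) ^ (l : ℝ) := by
    filter_upwards [eventually_ne_atTop 0] with l hl
    have hl' : (0 : ℝ) < l := by positivity
    positivity
  obtain ⟨c₁, hc₁, c₂, hc₂, L, hL⟩ := exists_pos_bounds_of_tendsto_div hK hv
    (tendsto_div_rpow_div_rpow_of_succ_eq ha hb (by positivity) hstep)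
  rw [hα]
  exact ⟨c₁, hc₁, c₂, hc₂, L, fun l hl => by simpa only [mul_div_assoc] using hL l hl⟩
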